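/- Let λ ∈ ℂ and j ∈ ℕ. Let φ : (0,∞) → ℂ be smooth and satisfy: (i) for all α, β ∈ ℕ, sup_{x>0} x^{α+β}|φ^{(α)}(x)| < ∞; (ii) there exist complex numbers a_κ (κ ∈ ℕ) such that for every α ∈ ℕ, φ^{(α)}(x) = α!·a_α + O(x) as x → 0⁺. Then the integral ∫_0^∞ (log x)^j φ(x) x^{s−λ−1} dx converges absolutely whenever Re s > Re λ, and there exists a function H : ℂ → ℂ such that: (a) H(s) equals this integral for all s with Re s > Re λ; (b) H is complex analytic on ℂ ∖ {λ − κ : κ ∈ ℕ}; (c) for every κ ∈ ℕ there exist an open neighborhood U of λ − κ and a function g analytic on U with H(s) = g(s) + (−1)^j · j! · a_κ · (s − λ + κ)^{−j−1} for all s ∈ U ∖ {λ − κ}. In other words, the Mellin transform of x^{−λ}(log x)^j φ(x) has a meromorphic continuation to ℂ whose only singularities are poles of pure order j+1 at the points λ − κ, with principal part (−1)^j j! a_κ (s − λ + κ)^{−j−1} at λ − κ. -/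

import Mathlib

open MeasureTheory Asymptotics Set Filter Topology

lemma rpow_isBigO_top {a b : ℝ} (hab : b ≤ a) :
    ((· ^ (-a)) : ℝ → ℝ) =O[atTop] (· ^ (-b) : ℝ → ℝ) := by
  rw [isBigO_iff]
  refine ⟨1, ?_⟩
  filter_upwards [eventually_ge_atTop (1:ℝ)] with x hx
  have hx0 : 0 < x := lt_of_lt_of_le one_pos hx
  rw [one_mul, Real.norm_eq_abs, Real.norm_eq_abs, abs_of_pos (Real.rpow_pos_of_pos hx0 _),
    abs_of_pos (Real.rpow_pos_of_pos hx0 _)]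
  exact Real.rpow_le_rpow_of_exponent_le hx (by linarith)

lemma rpow_isBigO_zero {a b : ℝ} (hab : a ≤ b) :
    ((· ^ (-a)) : ℝ → ℝ) =O[𝓝[>] 0] (· ^ (-b) : ℝ → ℝ) := by
  rw [isBigO_iff]
  refine ⟨1, ?_⟩
  filter_upwards [Ioo_mem_nhdsGT_of_mem (by exact ⟨le_refl 0, zero_lt_one⟩ : (0:ℝ) ∈ Ico 0 1)]
    with x hx
  rw [one_mul, Real.norm_eq_abs, Real.norm_eq_abs, abs_of_pos (Real.rpow_pos_of_pos hx.1 _),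
    abs_of_pos (Real.rpow_pos_of_pos hx.1 _)]
  exact Real.rpow_le_rpow_of_exponent_ge hx.1 hx.2.le (by linarith)

lemma logpow_isBigO_top {f : ℝ → ℂ} (j : ℕ) {a b : ℝ} (hab : b < a)
    (hf : f =O[atTop] (· ^ (-a) : ℝ → ℝ)) :
    (fun t : ℝ => (Real.log t : ℂ)^j * f t) =O[atTop] (· ^ (-b) : ℝ → ℝ) := by
  induction j generalizing b with
  | zero => simpa using hf.trans (rpow_isBigO_top hab.le)
  | succ n ih =>
      have h1 : (fun t : ℝ => (Real.log t : ℂ)^n * f t) =O[atTop] (· ^ (-((a+b)/2)) : ℝ → ℝ) :=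
        ih (by linarith)
      have h2 := isBigO_rpow_top_log_smul (by linarith : b < (a+b)/2) h1
      refine h2.congr' (Eventually.of_forall fun t => ?_) EventuallyEq.rfl
      simp only [Complex.real_smul, pow_succ]
      ring

lemma logpow_isBigO_zero {f : ℝ → ℂ} (j : ℕ) {a b : ℝ} (hab : a < b)
    (hf : f =O[𝓝[>] 0] (· ^ (-a) : ℝ → ℝ)) :
    (fun t : ℝ => (Real.log t : ℂ)^j * f t) =O[𝓝[>] 0] (· ^ (-b) : ℝ → ℝ) := by
  induction j generalizing b with
  | zero => simpa using hf.trans (rpow_isBigO_zero hab.le)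
  | succ n ih =>
      have h1 : (fun t : ℝ => (Real.log t : ℂ)^n * f t) =O[𝓝[>] 0] (· ^ (-((a+b)/2)) : ℝ → ℝ) :=
        ih (by linarith)
      have h2 := isBigO_rpow_zero_log_smul (by linarith : (a+b)/2 < b) h1
      refine h2.congr' (Eventually.of_forall fun t => ?_) EventuallyEq.rfl
      simp only [Complex.real_smul, pow_succ]
      ring

lemma contOn_loglogpow (m : ℕ) (w : ℂ) :
    ContinuousOn (fun x : ℝ => (Real.log x : ℂ)^m * (x:ℂ)^(w-1)) (Ioi 0) := by
  intro x hx
  apply ContinuousAt.continuousWithinAt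
  have h1 : ContinuousAt (fun x : ℝ => ((Real.log x : ℝ) : ℂ)) x :=
    Complex.continuous_ofReal.continuousAt.comp (Real.continuousAt_log (ne_of_gt hx))
  have h2 : ContinuousAt (fun x : ℝ => (x:ℂ)^(w-1)) x :=
    (continuousAt_cpow_const (Complex.ofReal_mem_slitPlane.2 hx)).comp
      Complex.continuous_ofReal.continuousAt
  exact (h1.pow m).mul h2

lemma logpow_cpow_isBigO_zero (m : ℕ) {w : ℂ} (hw : 0 < w.re) :
    (fun x : ℝ => (Real.log x : ℂ)^m * (x:ℂ)^w) =O[𝓝[>] 0] (· ^ (w.re/2) : ℝ → ℝ) := by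
  have hf : (fun x : ℝ => (x:ℂ)^w) =O[𝓝[>] 0] (· ^ (-(-w.re)) : ℝ → ℝ) := by
    rw [isBigO_iff]
    refine ⟨1, ?_⟩
    filter_upwards [self_mem_nhdsWithin] with x (hx : 0 < x)
    rw [one_mul, Complex.norm_cpow_eq_rpow_re_of_pos hx, neg_neg,
      Real.norm_eq_abs, abs_of_pos (Real.rpow_pos_of_pos hx _)]
  have := logpow_isBigO_zero m (by linarith : -w.re < -(w.re/2)) hf
  simpa using this

lemma tendsto_logpow_cpow_zero (m : ℕ) {w : ℂ} (hw : 0 < w.re) :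
    Tendsto (fun x : ℝ => (Real.log x : ℂ)^m * (x:ℂ)^w) (𝓝[>] 0) (𝓝 0) := by
  apply (logpow_cpow_isBigO_zero m hw).trans_tendsto
  have h : ContinuousAt (fun x : ℝ => x ^ (w.re/2)) 0 :=
    Real.continuousAt_rpow_const 0 _ (Or.inr (by linarith))
  have h2 : Tendsto (fun x : ℝ => x ^ (w.re/2)) (𝓝[>] 0) (𝓝 ((0:ℝ) ^ (w.re/2))) :=
    h.tendsto.mono_left (nhdsWithin_le_nhds (s := Set.Ioi 0))
  rwa [Real.zero_rpow (by positivity : w.re/2 ≠ 0)] at h2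

lemma key_integrable' (m : ℕ) {w : ℂ} (hw : 0 < w.re) :
    IntegrableOn (fun x : ℝ => (Real.log x : ℂ)^m * (x:ℂ)^(w-1)) (Ioc 0 1) := by
  have hbigO : (fun x : ℝ => |Real.log x|^m) =O[𝓝[>] 0] (· ^ (-(w.re/2)) : ℝ → ℝ) := by
    have h1 : (fun _ : ℝ => (1:ℂ)) =O[𝓝[>] 0] (· ^ (-(0:ℝ)) : ℝ → ℝ) := by
      simp only [neg_zero, Real.rpow_zero]
      exact isBigO_const_const 1 one_ne_zero _
    have := (logpow_isBigO_zero m (by linarith : (0:ℝ) < w.re/2) h1).norm_left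
    refine this.congr' (Eventually.of_forall fun x => ?_) EventuallyEq.rfl
    simp [abs_pow]
  have hmeas : AEStronglyMeasurable (fun x : ℝ => |Real.log x|^m)
      (volume.restrict (Ioi 0)) :=
    ((Real.measurable_log.norm.pow_const m).aestronglyMeasurable)
  obtain ⟨c, hc, hint⟩ := mellin_convergent_zero_of_isBigO hmeas hbigO
    (show w.re/2 < w.re by linarith)
  set d : ℝ := min c 1 with hd
  have hd0 : 0 < d := lt_min hc one_pos
  have hd1 : d ≤ 1 := min_le_right _ _
  have hsplit : Ioc (0:ℝ) 1 = Ioc 0 d ∪ Ioc d 1 := (Ioc_union_Ioc_eq_Ioc hd0.le hd1).symm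
  rw [hsplit, integrableOn_union]
  constructor
  · -- near zero : compare with the real integrand
    have hmeasF : AEStronglyMeasurable (fun x : ℝ => (Real.log x : ℂ)^m * (x:ℂ)^(w-1))
        (volume.restrict (Ioc 0 d)) :=
      ((contOn_loglogpow m w).mono (fun x hx => hx.1)).aestronglyMeasurable measurableSet_Ioc
    refine Integrable.mono' ((hint.mono_set (Ioc_subset_Ioc le_rfl (min_le_left _ _)))) hmeasF ?_
    refine (ae_restrict_iff' measurableSet_Ioc).mpr (Eventually.of_forall fun x hx => ?_)
    have hx0 : 0 < x := hx.1
    rw [norm_mul, norm_pow, show ‖((x:ℝ):ℂ)^(w-1)‖ = x ^ (w.re - 1) by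
        rw [Complex.norm_cpow_eq_rpow_re_of_pos hx0]
        norm_num,
      show ‖((Real.log x : ℝ):ℂ)‖ = |Real.log x| from Complex.norm_real _, mul_comm]
  · -- away from zero: continuity
    have : Ioc d 1 ⊆ Icc d 1 := Ioc_subset_Icc_self
    refine (ContinuousOn.integrableOn_compact isCompact_Icc ?_).mono_set this
    exact (contOn_loglogpow m w).mono (fun x hx => lt_of_lt_of_le hd0 hx.1)

lemma tendsto_intInt (m : ℕ) {w : ℂ} (hw : 0 < w.re) :
    Tendsto (fun n : ℕ => ∫ x in (1/(n+1):ℝ)..1, (Real.log x:ℂ)^m * (x:ℂ)^(w-1)) atTop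
      (𝓝 (∫ x in Ioc (0:ℝ) 1, (Real.log x:ℂ)^m * (x:ℂ)^(w-1))) := by
  have hunion : (⋃ n : ℕ, Ioc (1/(n+1):ℝ) 1) = Ioc 0 1 := by
    ext x
    simp only [mem_iUnion, mem_Ioc]
    constructor
    · rintro ⟨n, h1, h2⟩
      exact ⟨lt_trans (by positivity) h1, h2⟩
    · rintro ⟨hx0, hx1⟩
      obtain ⟨n, hn⟩ := exists_nat_one_div_lt hx0
      exact ⟨n, hn, hx1⟩
  have hmono : Monotone (fun n : ℕ => Ioc (1/(n+1):ℝ) 1) := by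
    intro p q hpq
    apply Ioc_subset_Ioc_left
    have hpq' : (p:ℝ) + 1 ≤ (q:ℝ) + 1 := by exact_mod_cast Nat.succ_le_succ hpq
    exact one_div_le_one_div_of_le (by positivity) hpq'
  have hint := key_integrable' m hw
  have h := tendsto_setIntegral_of_monotone (fun n => measurableSet_Ioc) hmono
    (by rw [hunion]; exact hint)
  rw [hunion] at h
  refine h.congr fun n => ?_
  have hn1 : (1/(n+1):ℝ) ≤ 1 := by
    rw [div_le_one (by positivity)]
    linarith [Nat.cast_nonneg (α := ℝ) n]
  rw [intervalIntegral.integral_of_le hn1]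

lemma key_integral' (m : ℕ) {w : ℂ} (hw : 0 < w.re) :
    ∫ x in Ioc (0:ℝ) 1, (Real.log x : ℂ)^m * (x:ℂ)^(w-1)
      = (-1)^m * (m.factorial : ℂ) * w^(-(m:ℤ)-1) := by
  have hw0 : w ≠ 0 := fun h => by simp [h] at hw
  have hzpow : ∀ k : ℕ, w^(-(k:ℤ)-1) = (w^(k+1))⁻¹ := by
    intro k
    rw [← zpow_natCast w (k+1), ← zpow_neg]
    congr 1
    push_cast
    ring
  induction m with
  | zero =>
      simp only [pow_zero, one_mul, Nat.factorial_zero, Nat.cast_one, CharP.cast_eq_zero, neg_zero,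
        zero_sub]
      rw [← intervalIntegral.integral_of_le zero_le_one,
        integral_cpow (Or.inl (by simp [hw] : (-1:ℝ) < (w-1).re))]
      rw [sub_add_cancel]
      simp [Complex.zero_cpow hw0, zpow_neg]
  | succ k ih =>
      have hc : ∀ ε : ℝ, 0 < ε → ε ≤ 1 →
          (∫ x in ε..1, (Real.log x:ℂ)^(k+1) * (x:ℂ)^(w-1))
            = -((Real.log ε:ℂ)^(k+1) * (ε:ℂ)^w / w)
              - ((k+1:ℕ):ℂ)/w * ∫ x in ε..1, (Real.log x:ℂ)^k * (x:ℂ)^(w-1) := by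
        intro ε hε hε1
        have huIcc : Set.uIcc ε 1 = Icc ε 1 := uIcc_of_le hε1
        have hpos : ∀ x ∈ Set.uIcc ε 1, 0 < x := by
          intro x hx
          rw [huIcc] at hx
          exact lt_of_lt_of_le hε hx.1
        have hderiv : ∀ x ∈ Set.uIcc ε 1,
            HasDerivAt (fun y : ℝ => (Real.log y:ℂ)^(k+1) * ((y:ℂ)^w / w))
              ((Real.log x:ℂ)^(k+1) * (x:ℂ)^(w-1)
                + ((k+1:ℕ):ℂ)/w * ((Real.log x:ℂ)^k * (x:ℂ)^(w-1))) x := by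
          intro x hx
          have hx0 : 0 < x := hpos x hx
          have h1 : HasDerivAt (fun y : ℝ => ((Real.log y : ℝ):ℂ)) (((x⁻¹:ℝ)):ℂ) x :=
            (Real.hasDerivAt_log hx0.ne').ofReal_comp
          have h2 : HasDerivAt (fun y : ℝ => (Real.log y:ℂ)^(k+1))
              (((k+1:ℕ):ℂ) * (Real.log x:ℂ)^k * ((x⁻¹:ℝ):ℂ)) x := by
            have hcomp := HasDerivAt.comp (x := x)
              (h₂ := fun z : ℂ => z^(k+1)) (h := fun y : ℝ => ((Real.log y : ℝ):ℂ))
              (hasDerivAt_pow (k+1) ((Real.log x : ℝ):ℂ)) h1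
            simpa [Function.comp_def] using hcomp
          have h3 : HasDerivAt (fun y : ℝ => (y:ℂ)^w / w) ((x:ℂ)^(w-1)) x := by
            have h4 := hasDerivAt_ofReal_cpow_const' hx0.ne'
              (show w - 1 ≠ -1 by
                intro h
                apply hw0
                linear_combination h)
            simpa [sub_add_cancel] using h4
          have h5 : HasDerivAt (fun y : ℝ => (Real.log y:ℂ)^(k+1) * ((y:ℂ)^w / w)) _ x :=
            h2.mul h3
          convert h5 using 1
          have hxC : (x:ℂ) ≠ 0 := Complex.ofReal_ne_zero.2 hx0.ne'
          have hxw : (x:ℂ)^(w-1) = (x:ℂ)^w / (x:ℂ) := by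
            rw [Complex.cpow_sub _ _ hxC, Complex.cpow_one]
          rw [hxw]
          push_cast
          field_simp
          ring
        have hii : ∀ p : ℕ, IntervalIntegrable
            (fun x : ℝ => (Real.log x:ℂ)^p * (x:ℂ)^(w-1)) volume ε 1 := by
          intro p
          apply ContinuousOn.intervalIntegrable
          exact (contOn_loglogpow p w).mono (fun x hx => hpos x hx)
        have hii2 : IntervalIntegrable
            (fun x : ℝ => (Real.log x:ℂ)^(k+1) * (x:ℂ)^(w-1)
              + ((k+1:ℕ):ℂ)/w * ((Real.log x:ℂ)^k * (x:ℂ)^(w-1))) volume ε 1 :=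
          (hii (k+1)).add ((hii k).const_mul _)
        have hftc := intervalIntegral.integral_eq_sub_of_hasDerivAt hderiv hii2
        rw [intervalIntegral.integral_add (hii (k+1)) ((hii k).const_mul _),
          intervalIntegral.integral_const_mul] at hftc
        have hu1 : (Real.log (1:ℝ):ℂ)^(k+1) * (((1:ℝ):ℂ)^w / w) = 0 := by
          simp [Real.log_one]
        rw [hu1] at hftc
        linear_combination hftc
      -- now take limits along ε = 1/(n+1)
      have hεn : Tendsto (fun n : ℕ => (1/(n+1):ℝ)) atTop (𝓝[>] 0) := by
        apply tendsto_nhdsWithin_of_tendsto_nhds_of_eventually_within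
        · exact tendsto_one_div_add_atTop_nhds_zero_nat
        · exact Eventually.of_forall fun n => mem_Ioi.mpr (by positivity)
      have hbdry : Tendsto (fun n : ℕ =>
          (Real.log (1/(n+1):ℝ):ℂ)^(k+1) * ((1/(n+1):ℝ):ℂ)^w / w) atTop (𝓝 0) := by
        have hco := ((tendsto_logpow_cpow_zero (k+1) hw).div_const w).comp hεn
        simpa only [Function.comp_def, zero_div] using hco
      have hL : Tendsto (fun n : ℕ =>
          ∫ x in (1/(n+1):ℝ)..1, (Real.log x:ℂ)^(k+1) * (x:ℂ)^(w-1)) atTop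
          (𝓝 (-(0:ℂ) - ((k+1:ℕ):ℂ)/w *
            ∫ x in Ioc (0:ℝ) 1, (Real.log x:ℂ)^k * (x:ℂ)^(w-1))) := by
        have h2 := (hbdry.neg).sub ((tendsto_intInt k hw).const_mul (((k+1:ℕ):ℂ)/w))
        rw [neg_zero] at h2 ⊢
        refine h2.congr fun n => ?_
        have hn0 : (0:ℝ) < 1/(n+1) := by positivity
        have hn1 : (1/(n+1):ℝ) ≤ 1 := by
          rw [div_le_one (by positivity)]
          linarith [Nat.cast_nonneg (α := ℝ) n]
        exact (hc _ hn0 hn1).symm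
      have huniq := tendsto_nhds_unique (tendsto_intInt (k+1) hw) hL
      rw [huniq, ih]
      rw [hzpow k, hzpow (k+1)]
      have : (Nat.factorial (k+1) : ℂ) = (k+1) * Nat.factorial k := by
        rw [Nat.factorial_succ]; push_cast; ring
      rw [this]
      have hwp : w^(k+1+1) = w^(k+1) * w := by ring
      rw [hwp]
      field_simp
      push_cast
      ring

noncomputable def polyS (a : ℕ → ℂ) (N : ℕ) (x : ℝ) : ℂ := ∑ κ ∈ Finset.range N, a κ * (x:ℂ)^κ

lemma polyS_hasDerivAt (b : ℕ → ℂ) (N : ℕ) (x : ℝ) :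
    HasDerivAt (polyS b (N+1))
      (polyS (fun κ => ((κ+1:ℕ):ℂ) * b (κ+1)) N x) x := by
  have hterm : ∀ κ : ℕ, HasDerivAt (fun y : ℝ => b κ * (y:ℂ)^κ)
      (b κ * ((κ:ℂ) * (x:ℂ)^(κ-1))) x := by
    intro κ
    have h1 : HasDerivAt (fun y : ℝ => ((y:ℝ):ℂ)) ((1:ℝ):ℂ) x :=
      (hasDerivAt_id x).ofReal_comp
    have h2 := HasDerivAt.comp (x := x) (h₂ := fun z : ℂ => z^κ)
      (h := fun y : ℝ => ((y:ℝ):ℂ)) (hasDerivAt_pow κ (x:ℂ)) h1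
    simpa [Function.comp] using h2.const_mul (b κ)
  have hsum := HasDerivAt.fun_sum (fun κ (_ : κ ∈ Finset.range (N+1)) => hterm κ)
  have heq : ∑ κ ∈ Finset.range (N+1), b κ * ((κ:ℂ) * (x:ℂ)^(κ-1))
      = polyS (fun κ => ((κ+1:ℕ):ℂ) * b (κ+1)) N x := by
    rw [Finset.sum_range_succ']
    simp only [polyS]
    simp only [Nat.cast_zero, zero_mul, mul_zero, add_zero, Nat.add_sub_cancel]
    refine Finset.sum_congr rfl fun κ _ => ?_
    push_cast
    ring
  rw [heq] at hsum
  exact hsum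

lemma polyS_tendsto (b : ℕ → ℂ) (N : ℕ) :
    Tendsto (polyS b (N+1)) (𝓝[>] (0:ℝ)) (𝓝 (b 0)) := by
  have hcont : Continuous (polyS b (N+1)) := by
    apply continuous_finset_sum
    intro κ _
    exact continuous_const.mul (Complex.continuous_ofReal.pow κ)
  have h0 : polyS b (N+1) 0 = b 0 := by
    rw [polyS, Finset.sum_eq_single_of_mem 0 (Finset.mem_range.mpr (Nat.succ_pos N))]
    · simp
    · intro i _ hi
      simp [Complex.ofReal_zero, zero_pow hi]
  have := (hcont.tendsto 0).mono_left (nhdsWithin_le_nhds (s := Set.Ioi 0))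
  rwa [h0] at this

lemma taylor_remainder (N : ℕ) (ψ : ℝ → ℂ) (b : ℕ → ℂ)
    (hsm : ContDiffOn ℝ (⊤ : ℕ∞) ψ (Set.Ioi 0))
    (h : ∀ α : ℕ, (fun x : ℝ => iteratedDeriv α ψ x - (α.factorial : ℂ) * b α)
      =O[𝓝[>] 0] (fun x : ℝ => x)) :
    (fun x : ℝ => ψ x - polyS b N x) =O[𝓝[>] 0] (fun x : ℝ => x ^ N) := by
  induction N generalizing ψ b with
  | zero =>
      simp only [polyS, Finset.range_zero, Finset.sum_empty, sub_zero, pow_zero]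
      have h0 := h 0
      rw [iteratedDeriv_zero] at h0
      have hid : (fun x : ℝ => x) =O[𝓝[>] 0] (fun _ : ℝ => (1:ℝ)) := by
        rw [isBigO_iff]
        refine ⟨1, ?_⟩
        filter_upwards [Ioo_mem_nhdsGT_of_mem
          (show (0:ℝ) ∈ Ico (0:ℝ) 1 from ⟨le_refl 0, one_pos⟩)] with x hx
        simp only [Real.norm_eq_abs, norm_one, one_mul, abs_one]
        rw [abs_of_pos hx.1]
        exact hx.2.le
      have h1 := h0.trans hid
      have h2 : (fun _ : ℝ => ((Nat.factorial 0 : ℕ):ℂ) * b 0) =O[𝓝[>] 0]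
          (fun _ : ℝ => (1:ℝ)) := by
        by_cases hb : ((Nat.factorial 0 : ℕ):ℂ) * b 0 = 0
        · simp only [hb]
          exact isBigO_zero _ _
        · exact isBigO_const_const _ one_ne_zero _
      simpa using h1.add h2
  | succ N ih =>
      set ψ' := deriv ψ with hψ'def
      set b' : ℕ → ℂ := fun κ => ((κ+1:ℕ):ℂ) * b (κ+1) with hb'def
      have hsm' : ContDiffOn ℝ (⊤:ℕ∞) ψ' (Set.Ioi 0) :=
        hsm.deriv_of_isOpen isOpen_Ioi (by exact_mod_cast le_top)
      have h' : ∀ α : ℕ, (fun x : ℝ => iteratedDeriv α ψ' x - (α.factorial:ℂ) * b' α)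
          =O[𝓝[>] 0] (fun x : ℝ => x) := by
        intro α
        have hα := h (α+1)
        rw [iteratedDeriv_succ'] at hα
        have heq : ((α.factorial:ℂ) * b' α) = (((α+1).factorial:ℂ) * b (α+1)) := by
          rw [hb'def, Nat.factorial_succ]
          push_cast
          ring
        simpa only [heq] using hα
      have hIH := ih ψ' b' hsm' h'
      obtain ⟨C, hCpos, hC⟩ := hIH.exists_pos
      obtain ⟨δ, hδ, hδsub⟩ := mem_nhdsGT_iff_exists_Ioo_subset.mp hC.bound
      -- limit of ψ at 0
      have hψ0 : Tendsto ψ (𝓝[>] (0:ℝ)) (𝓝 (b 0)) := by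
        have h0 := h 0
        rw [iteratedDeriv_zero] at h0
        have hx0 : Tendsto (fun x : ℝ => x) (𝓝[>] (0:ℝ)) (𝓝 0) :=
          (continuous_id.tendsto 0).mono_left nhdsWithin_le_nhds
        have hzz := h0.trans_tendsto hx0
        have := hzz.add (tendsto_const_nhds (x := ((Nat.factorial 0:ℕ):ℂ) * b 0))
        simpa using this
      -- r tendsto 0
      set r : ℝ → ℂ := fun x => ψ x - polyS b (N+1) x with hrdef
      have hr0 : Tendsto r (𝓝[>] (0:ℝ)) (𝓝 0) := by
        have := hψ0.sub (polyS_tendsto b N)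
        simpa using this
      -- derivative of r on Ioi 0
      have hrd : ∀ x : ℝ, 0 < x → HasDerivAt r (ψ' x - polyS b' N x) x := by
        intro x hx
        have hψd : HasDerivAt ψ (ψ' x) x := by
          have hd := (hsm.differentiableOn (by simp) x hx).differentiableAt
            (isOpen_Ioi.mem_nhds hx)
          exact hd.hasDerivAt
        exact hψd.sub (polyS_hasDerivAt b N x)
      -- pointwise bound for r
      have hbound : ∀ x : ℝ, x ∈ Set.Ioo 0 δ → ‖r x‖ ≤ C * x^(N+1) := by
        intro x hx
        have hineq : ∀ y : ℝ, y ∈ Set.Ioo 0 x → ‖r x - r y‖ ≤ C * x^(N+1) := by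
          intro y hy
          have hyx : y ≤ x := hy.2.le
          have huIcc : Set.uIcc y x = Icc y x := uIcc_of_le hyx
          have hftc : ∫ t in y..x, (ψ' t - polyS b' N t)
              = r x - r y := by
            apply intervalIntegral.integral_eq_sub_of_hasDerivAt
            · intro t ht
              rw [huIcc] at ht
              exact hrd t (lt_of_lt_of_le hy.1 ht.1)
            · apply ContinuousOn.intervalIntegrable
              rw [huIcc]
              have hsubI : Icc y x ⊆ Set.Ioi (0:ℝ) := fun t ht => lt_of_lt_of_le hy.1 ht.1
              apply ContinuousOn.sub
              · exact (hsm'.continuousOn).mono hsubI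
              · exact ((continuous_finset_sum _ fun κ _ =>
                  continuous_const.mul (Complex.continuous_ofReal.pow κ)).continuousOn)
          rw [← hftc]
          have hb2 : ∀ t ∈ Set.uIoc y x, ‖ψ' t - polyS b' N t‖ ≤ C * x^N := by
            intro t ht
            rw [Set.uIoc_of_le hyx] at ht
            have ht0 : 0 < t := lt_trans hy.1 ht.1
            have htδ : t < δ := lt_of_le_of_lt ht.2 hx.2
            have := hδsub ⟨ht0, htδ⟩
            simp only [Set.mem_setOf_eq] at this
            calc ‖ψ' t - polyS b' N t‖ ≤ C * ‖t ^ N‖ := this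
              _ = C * t^N := by
                  rw [Real.norm_eq_abs, abs_of_pos (pow_pos ht0 N)]
              _ ≤ C * x^N := by
                  apply mul_le_mul_of_nonneg_left _ hCpos.le
                  exact pow_le_pow_left₀ ht0.le ht.2 N
          have h3 := intervalIntegral.norm_integral_le_of_norm_le_const hb2
          calc ‖∫ t in y..x, (ψ' t - polyS b' N t)‖ ≤ C * x^N * |x - y| := h3
            _ ≤ C * x^N * x := by
                apply mul_le_mul_of_nonneg_left _
                  (mul_nonneg hCpos.le (pow_nonneg hx.1.le N))
                rw [abs_of_pos (by linarith [hy.1, hy.2] : (0:ℝ) < x - y)]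
                linarith [hy.1]
            _ = C * x^(N+1) := by ring
        -- take y → 0
        have htends : Tendsto (fun y : ℝ => ‖r x - r y‖) (𝓝[>] (0:ℝ)) (𝓝 ‖r x‖) := by
          have := (tendsto_const_nhds (x := r x) (f := 𝓝[>] (0:ℝ))).sub hr0
          rw [sub_zero] at this
          exact this.norm
        apply le_of_tendsto htends
        filter_upwards [Ioo_mem_nhdsGT_of_mem
          (show (0:ℝ) ∈ Ico (0:ℝ) x from ⟨le_refl 0, hx.1⟩)] with y hy
        exact hineq y hy
      -- conclude
      rw [isBigO_iff]
      refine ⟨C, ?_⟩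
      filter_upwards [Ioo_mem_nhdsGT_of_mem
        (show (0:ℝ) ∈ Ico (0:ℝ) δ from ⟨le_refl 0, hδ⟩)] with x hx
      rw [Real.norm_eq_abs, abs_of_pos (pow_pos hx.1 (N+1))]
      exact hbound x hx

noncomputable def FF (φ : ℝ → ℂ) (a : ℕ → ℂ) (j N : ℕ) (x : ℝ) : ℂ :=
  (Real.log x : ℂ)^j * (φ x - Set.indicator (Set.Ioo 0 1) (polyS a N) x)

noncomputable def HH (lam : ℂ) (φ : ℝ → ℂ) (a : ℕ → ℂ) (j N : ℕ) (s : ℂ) : ℂ :=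
  mellin (FF φ a j N) (s - lam) +
    ∑ κ ∈ Finset.range N, (-1)^j * (j.factorial : ℂ) * a κ * (s - lam + κ)^(-(j:ℤ)-1)

lemma contOn_logpow_mul {f : ℝ → ℂ} (j : ℕ) (hf : ContinuousOn f (Set.Ioi 0)) :
    ContinuousOn (fun x : ℝ => (Real.log x : ℂ)^j * f x) (Set.Ioi 0) := by
  apply ContinuousOn.mul _ hf
  apply ContinuousOn.pow
  intro x hx
  exact (Complex.continuous_ofReal.continuousAt.comp
    (Real.continuousAt_log (ne_of_gt hx))).continuousWithinAt

lemma polyS_continuous (a : ℕ → ℂ) (N : ℕ) : Continuous (polyS a N) :=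
  continuous_finset_sum _ fun κ _ => continuous_const.mul (Complex.continuous_ofReal.pow κ)

lemma FF_locInt (φ : ℝ → ℂ) (a : ℕ → ℂ) (j N : ℕ) (hφ : ContinuousOn φ (Set.Ioi 0)) :
    LocallyIntegrableOn (FF φ a j N) (Set.Ioi 0) volume := by
  rw [locallyIntegrableOn_iff isOpen_Ioi.isLocallyClosed]
  intro K hK hKc
  have h1 : IntegrableOn (fun x : ℝ => (Real.log x:ℂ)^j * φ x) K volume :=
    ContinuousOn.integrableOn_compact hKc ((contOn_logpow_mul j hφ).mono hK)
  have h2 : IntegrableOn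
      (Set.indicator (Set.Ioo 0 1) (fun x : ℝ => (Real.log x:ℂ)^j * polyS a N x)) K volume := by
    rw [IntegrableOn, integrable_indicator_iff measurableSet_Ioo, IntegrableOn,
      Measure.restrict_restrict measurableSet_Ioo]
    have h3 : IntegrableOn (fun x : ℝ => (Real.log x:ℂ)^j * polyS a N x) K volume :=
      ContinuousOn.integrableOn_compact hKc
        ((contOn_logpow_mul j (polyS_continuous a N).continuousOn).mono hK)
    exact h3.mono_set inter_subset_right
  refine IntegrableOn.congr_fun (h1.sub h2) (fun x _ => ?_) hKc.measurableSet
  simp only [Pi.sub_apply]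
  by_cases hx1 : x ∈ Set.Ioo (0:ℝ) 1
  · simp [FF, Set.indicator_of_mem hx1]
    ring
  · simp [FF, Set.indicator_of_notMem hx1]

lemma FF_top (φ : ℝ → ℂ) (a : ℕ → ℂ) (j N : ℕ)
    (hb : ∀ n : ℕ, ∃ C : ℝ, ∀ x : ℝ, 0 < x → x ^ n * ‖φ x‖ ≤ C) (r : ℝ) :
    FF φ a j N =O[atTop] (· ^ (-r) : ℝ → ℝ) := by
  have hφO : φ =O[atTop] (· ^ (-(r+1)) : ℝ → ℝ) := by
    obtain ⟨C, hC⟩ := hb ⌈r+1⌉₊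
    have hC0 : 0 ≤ C := le_trans (by positivity) (hC 1 one_pos)
    rw [isBigO_iff]
    refine ⟨C, ?_⟩
    filter_upwards [eventually_ge_atTop (1:ℝ)] with x hx
    have hx0 : 0 < x := lt_of_lt_of_le one_pos hx
    have h2 : ‖φ x‖ ≤ C * x^(-(⌈r+1⌉₊:ℝ)) := by
      rw [Real.rpow_neg hx0.le, Real.rpow_natCast]
      have h3 := hC x hx0
      calc ‖φ x‖ = (x^⌈r+1⌉₊ * ‖φ x‖) / x^⌈r+1⌉₊ := by
            field_simp
        _ ≤ C / x^⌈r+1⌉₊ := by gcongr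
        _ = C * (x^⌈r+1⌉₊)⁻¹ := div_eq_mul_inv C _
    calc ‖φ x‖ = ‖φ x‖ := rfl
      _ ≤ C * x^(-(⌈r+1⌉₊:ℝ)) := h2
      _ ≤ C * x^(-(r+1)) := by
          apply mul_le_mul_of_nonneg_left _ hC0
          exact Real.rpow_le_rpow_of_exponent_le hx (neg_le_neg (Nat.le_ceil _))
      _ ≤ C * ‖x^(-(r+1))‖ := by
          rw [Real.norm_eq_abs, abs_of_pos (Real.rpow_pos_of_pos hx0 _)]
  have hlog := logpow_isBigO_top j (show r < r+1 by linarith) hφO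
  refine hlog.congr' ?_ EventuallyEq.rfl
  filter_upwards [eventually_ge_atTop (1:ℝ)] with x hx
  have hx1 : x ∉ Set.Ioo (0:ℝ) 1 := fun h => absurd h.2 (not_lt.mpr hx)
  rw [FF, Set.indicator_of_notMem hx1, sub_zero]

lemma FF_zero (φ : ℝ → ℂ) (a : ℕ → ℂ) (j N : ℕ)
    (htay : (fun x : ℝ => φ x - polyS a N x) =O[𝓝[>] 0] (fun x : ℝ => x^N))
    {b : ℝ} (hbN : -(N:ℝ) < b) :
    FF φ a j N =O[𝓝[>] 0] (· ^ (-b) : ℝ → ℝ) := by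
  have h1 : (fun x : ℝ => φ x - polyS a N x) =O[𝓝[>] 0] (· ^ (-(-(N:ℝ))) : ℝ → ℝ) := by
    refine htay.trans (IsBigO.of_bound 1 ?_)
    filter_upwards [self_mem_nhdsWithin] with x (hx : 0 < x)
    rw [neg_neg, one_mul, Real.norm_eq_abs, Real.norm_eq_abs, Real.rpow_natCast]
  have h2 := logpow_isBigO_zero j (show -(N:ℝ) < b from hbN) h1
  refine h2.congr' ?_ EventuallyEq.rfl
  filter_upwards [Ioo_mem_nhdsGT_of_mem
    (show (0:ℝ) ∈ Ico (0:ℝ) 1 from ⟨le_refl 0, one_pos⟩)] with x hx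
  rw [FF, Set.indicator_of_mem hx]

lemma HH_step (lam : ℂ) (φ : ℝ → ℂ) (a : ℕ → ℂ) (j N : ℕ) (s : ℂ)
    (hs : -(N:ℝ) < (s - lam).re)
    (hcN : MellinConvergent (FF φ a j N) (s - lam))
    (hcN1 : MellinConvergent (FF φ a j (N+1)) (s - lam)) :
    HH lam φ a j (N+1) s = HH lam φ a j N s := by
  set w := s - lam with hwdef
  have hwN : 0 < (w + N).re := by
    rw [Complex.add_re, Complex.natCast_re]
    linarith
  have hdiff : mellin (FF φ a j N) w - mellin (FF φ a j (N+1)) w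
      = a N * ((-1)^j * (j.factorial:ℂ) * (w + N)^(-(j:ℤ)-1)) := by
    rw [mellin, mellin, ← integral_sub hcN hcN1]
    have heq : Set.EqOn
        (fun x : ℝ => (x:ℂ)^(w-1) • FF φ a j N x - (x:ℂ)^(w-1) • FF φ a j (N+1) x)
        (Set.indicator (Set.Ioo 0 1)
          (fun x : ℝ => a N * ((Real.log x:ℂ)^j * (x:ℂ)^((w + N) - 1))))
        (Set.Ioi (0:ℝ)) := by
      intro x hx
      by_cases hx1 : x ∈ Set.Ioo (0:ℝ) 1
      · have hx0 : (x:ℂ) ≠ 0 := Complex.ofReal_ne_zero.2 (ne_of_gt hx1.1)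
        simp only [Set.indicator_of_mem hx1, FF, smul_eq_mul, polyS, Finset.sum_range_succ]
        have hcpow : (x:ℂ)^((w+N)-1) = (x:ℂ)^(w-1) * (x:ℂ)^(N:ℕ) := by
          rw [← Complex.cpow_natCast (x:ℂ) N, ← Complex.cpow_add _ _ hx0]
          congr 1
          ring
        rw [hcpow]
        ring
      · simp only [Set.indicator_of_notMem hx1, FF, smul_eq_mul]
        ring
    rw [setIntegral_congr_fun measurableSet_Ioi heq,
      setIntegral_indicator measurableSet_Ioo,
      show Set.Ioi (0:ℝ) ∩ Set.Ioo 0 1 = Set.Ioo 0 1 from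
        inter_eq_self_of_subset_right (fun x hx => hx.1),
      MeasureTheory.integral_const_mul,
      ← integral_Ioc_eq_integral_Ioo, key_integral' j hwN]
  rw [HH, HH, Finset.sum_range_succ]
  rw [← hwdef]
  linear_combination -hdiff

theorem stmt_10 (lam : ℂ) (j : ℕ) (φ : ℝ → ℂ) (a : ℕ → ℂ)
    (hsmooth : ContDiffOn ℝ (⊤ : ℕ∞) φ (Set.Ioi 0))
    (hbound : ∀ α β : ℕ, ∃ C : ℝ, ∀ x : ℝ, 0 < x →
      x ^ (α + β) * ‖iteratedDeriv α φ x‖ ≤ C)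
    (hasym : ∀ α : ℕ,
      (fun x : ℝ => iteratedDeriv α φ x - (α.factorial : ℂ) * a α)
        =O[nhdsWithin 0 (Set.Ioi 0)] fun x : ℝ => x) :
    (∀ s : ℂ, lam.re < s.re →
        IntegrableOn (fun x : ℝ =>
          (Real.log x : ℂ) ^ j * φ x * (x : ℂ) ^ (s - lam - 1)) (Set.Ioi 0)) ∧
      ∃ H : ℂ → ℂ,
        (∀ s : ℂ, lam.re < s.re →
          H s = ∫ x in Set.Ioi (0 : ℝ),
            (Real.log x : ℂ) ^ j * φ x * (x : ℂ) ^ (s - lam - 1)) ∧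
        DifferentiableOn ℂ H {s : ℂ | ∀ κ : ℕ, s ≠ lam - κ} ∧
        ∀ κ : ℕ, ∃ U : Set ℂ, IsOpen U ∧ lam - κ ∈ U ∧
          ∃ g : ℂ → ℂ, DifferentiableOn ℂ g U ∧
            ∀ s ∈ U, s ≠ lam - κ →
              H s = g s + (-1) ^ j * (j.factorial : ℂ) * a κ *
                (s - lam + κ) ^ (-(j : ℤ) - 1) := by
  have hφcont := hsmooth.continuousOn
  have hb : ∀ n : ℕ, ∃ C : ℝ, ∀ x : ℝ, 0 < x → x ^ n * ‖φ x‖ ≤ C := by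
    intro n
    obtain ⟨C, hC⟩ := hbound 0 n
    exact ⟨C, fun x hx => by simpa using hC x hx⟩
  have htay : ∀ N : ℕ, (fun x : ℝ => φ x - polyS a N x) =O[𝓝[>] 0] (fun x : ℝ => x ^ N) :=
    fun N => taylor_remainder N φ a hsmooth hasym
  have hloc := fun N => FF_locInt φ a j N hφcont
  have hconv : ∀ (N : ℕ) (w : ℂ), -(N:ℝ) < w.re → MellinConvergent (FF φ a j N) w := by
    intro N w hw
    exact mellinConvergent_of_isBigO_rpow (hloc N) (FF_top φ a j N hb (w.re+1)) (by linarith)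
      (FF_zero φ a j N (htay N) (show -(N:ℝ) < -((-w.re + (N:ℝ))/2) by linarith)) (by linarith)
  have hdiffM : ∀ (N : ℕ) (w : ℂ), -(N:ℝ) < w.re →
      DifferentiableAt ℂ (mellin (FF φ a j N)) w := by
    intro N w hw
    exact mellin_differentiableAt_of_isBigO_rpow (hloc N) (FF_top φ a j N hb (w.re+1))
      (by linarith)
      (FF_zero φ a j N (htay N) (show -(N:ℝ) < -((-w.re + (N:ℝ))/2) by linarith)) (by linarith)
  have hstep : ∀ (N : ℕ) (s : ℂ), -(N:ℝ) < (s - lam).re →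
      HH lam φ a j (N+1) s = HH lam φ a j N s := by
    intro N s hs
    refine HH_step lam φ a j N s hs (hconv N _ hs) (hconv (N+1) _ ?_)
    push_cast
    linarith
  have hglue : ∀ (M N : ℕ) (s : ℂ), N ≤ M → -(N:ℝ) < (s - lam).re →
      HH lam φ a j M s = HH lam φ a j N s := by
    intro M
    induction M with
    | zero => intro N s hNM _; rw [Nat.le_zero.mp hNM]
    | succ M ihM =>
        intro N s hNM hs
        rcases Nat.lt_or_ge N (M+1) with h | h
        · have hNM' : N ≤ M := Nat.lt_succ_iff.mp h
          have hsM : -(M:ℝ) < (s - lam).re := by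
            have hcast : (N:ℝ) ≤ M := by exact_mod_cast hNM'
            linarith
          rw [hstep M s hsM]
          exact ihM N s hNM' hs
        · rw [le_antisymm hNM h]
  set Nf : ℂ → ℕ := fun s => ⌈(lam - s).re⌉₊ + 1 with hNfdef
  have hNf : ∀ s : ℂ, -((Nf s : ℕ):ℝ) < (s - lam).re := by
    intro s
    have h1 := Nat.le_ceil ((lam - s).re)
    have h2 : (s - lam).re = -((lam - s).re) := by
      simp [Complex.sub_re]
    have h3 : ((Nf s : ℕ):ℝ) = (⌈(lam - s).re⌉₊ : ℝ) + 1 := by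
      simp [hNfdef]
    rw [h2, h3]
    linarith
  set H : ℂ → ℂ := fun s => HH lam φ a j (Nf s) s with hHdef
  have hHeq : ∀ (s : ℂ) (N : ℕ), -(N:ℝ) < (s - lam).re → H s = HH lam φ a j N s := by
    intro s N hN
    rcases le_total N (Nf s) with h | h
    · exact hglue (Nf s) N s h hN
    · exact (hglue N (Nf s) s h (hNf s)).symm
  have hsre : ∀ s : ℂ, lam.re < s.re → (0:ℝ) < (s - lam).re := by
    intro s hs
    rw [Complex.sub_re]
    linarith
  constructor
  · -- integrability
    intro s hs
    have hc0 := hconv 0 (s - lam) (by simpa using hsre s hs)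
    refine IntegrableOn.congr_fun hc0 (fun x hx => ?_) measurableSet_Ioi
    simp only [FF, polyS, Finset.range_zero, Finset.sum_empty, smul_eq_mul,
      Set.indicator_apply]
    split <;> ring
  · refine ⟨H, ?_, ?_, ?_⟩
    · -- equality with integral
      intro s hs
      rw [hHeq s 0 (by simpa using hsre s hs), HH]
      simp only [Finset.range_zero, Finset.sum_empty, add_zero]
      rw [mellin]
      refine setIntegral_congr_fun measurableSet_Ioi (fun x hx => ?_)
      simp only [FF, polyS, Finset.range_zero, Finset.sum_empty, smul_eq_mul,
        Set.indicator_apply]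
      split <;> ring
    · -- differentiability away from poles
      intro s₀ hs₀
      simp only [Set.mem_setOf_eq] at hs₀
      have hV : IsOpen {s : ℂ | -((Nf s₀ : ℕ):ℝ) < (s - lam).re} := by
        have hcont : Continuous fun s : ℂ => (s - lam).re :=
          Complex.continuous_re.comp (continuous_id.sub continuous_const)
        exact isOpen_Ioi.preimage hcont
      have hdHH : DifferentiableAt ℂ (HH lam φ a j (Nf s₀)) s₀ := by
        apply DifferentiableAt.fun_add
        · exact (hdiffM (Nf s₀) (s₀ - lam) (hNf s₀)).comp (f := fun s : ℂ => s - lam) s₀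
            (differentiableAt_id.sub_const lam)
        · apply DifferentiableAt.fun_sum
          intro κ _
          apply DifferentiableAt.const_mul
          apply DifferentiableAt.zpow
          · exact (differentiableAt_id.sub_const lam).add_const _
          · left
            intro h
            exact hs₀ κ (by linear_combination h)
      have hev : H =ᶠ[𝓝 s₀] HH lam φ a j (Nf s₀) :=
        eventually_of_mem (hV.mem_nhds (hNf s₀)) (fun s hs => hHeq s (Nf s₀) hs)
      exact (hdHH.congr_of_eventuallyEq hev).differentiableWithinAt
    · -- poles
      intro κ
      refine ⟨{s : ℂ | -((κ:ℝ)+1) < (s - lam).re} ∩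
        (⋂ i ∈ Finset.range κ, {(lam - (i:ℕ) : ℂ)}ᶜ), ?_, ?_, ?_⟩
      · refine IsOpen.inter ?_ (isOpen_biInter_finset fun i _ => isOpen_compl_singleton)
        have hcont : Continuous fun s : ℂ => (s - lam).re :=
          Complex.continuous_re.comp (continuous_id.sub continuous_const)
        exact isOpen_Ioi.preimage hcont
      · constructor
        · simp only [Set.mem_setOf_eq]
          have hre : ((lam - (κ:ℂ)) - lam).re = -(κ:ℝ) := by
            have hid : (lam - (κ:ℂ)) - lam = -(κ:ℂ) := by ring
            rw [hid, Complex.neg_re, Complex.natCast_re]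
          rw [hre]
          linarith
        · simp only [Set.mem_iInter, Set.mem_compl_iff, Set.mem_singleton_iff]
          intro i hi h
          rw [Finset.mem_range] at hi
          have hκi : (κ:ℂ) = i := by linear_combination -h
          have : κ = i := by exact_mod_cast hκi
          omega
      · refine ⟨fun s => mellin (FF φ a j (κ+1)) (s - lam) +
          ∑ i ∈ Finset.range κ, (-1)^j * (j.factorial:ℂ) * a i * (s - lam + i)^(-(j:ℤ)-1),
          ?_, ?_⟩
        · rintro s ⟨hs1, hs2⟩
          simp only [Set.mem_setOf_eq] at hs1
          simp only [Set.mem_iInter, Set.mem_compl_iff, Set.mem_singleton_iff] at hs2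
          apply DifferentiableAt.differentiableWithinAt
          apply DifferentiableAt.fun_add
          · exact (hdiffM (κ+1) (s - lam) (by push_cast; linarith)).comp (f := fun s : ℂ => s - lam) s
              (differentiableAt_id.sub_const lam)
          · apply DifferentiableAt.fun_sum
            intro i hi
            rw [Finset.mem_range] at hi
            apply DifferentiableAt.const_mul
            apply DifferentiableAt.zpow
            · exact (differentiableAt_id.sub_const lam).add_const _
            · left
              intro h
              exact hs2 i (Finset.mem_range.mpr hi) (by linear_combination h)
        · rintro s ⟨hs1, _⟩ _
          simp only [Set.mem_setOf_eq] at hs1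
          rw [hHeq s (κ+1) (by push_cast; linarith), HH, Finset.sum_range_succ]
          ring
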